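/- Let P₀, P₁, …, P_m be a symmetric Clifford system on ℝ^{2l} and F(x) = |x|⁴ − 2∑_{i=0}^{m} ⟨P_i x, x⟩² the FKM polynomial. Then ⟨∇F(x), x⟩ = 4F(x) for every x ∈ ℝ^{2l}, and for every unit vector x ∈ S^{2l−1}(1) the squared norm of the component of ∇F(x) tangent to the sphere satisfies |∇F(x)|² − ⟨∇F(x), x⟩² = 16(1 − F(x)²). (Equivalently, the restriction f = F|_{S^{2l−1}(1)} satisfies the transnormal equation |∇^{S}f|² = 16(1 − f²) = g²(1 − f²) with g = 4.) -/

import Mathlib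

/-!
Euler's identity for the quartic `F` gives `⟪∇F(x), x⟫ = 4 F(x)`. Writing `aᵢ = ⟪Pᵢ x, x⟫`,
`∇F(x) = 4|x|² x - 8 ∑ aᵢ Pᵢ x`, and the Clifford relations make the vectors `Pᵢ x` pairwise
orthogonal of length `|x|`. Hence `|∑ aᵢ Pᵢ x|² = |x|² ∑ aᵢ² = |x|² ⟪∑ aᵢ Pᵢ x, x⟫`, the cross
terms cancel, and `|∇F(x)|² = 16 |x|⁶`. On the unit sphere this is
`|∇F|² - ⟪∇F, x⟫² = 16 - 16 F²`.
-/

open RealInnerProductSpace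

variable {E : Type*} [NormedAddCommGroup E] [InnerProductSpace ℝ E]

namespace LinearMap.IsSymmetric

variable [FiniteDimensional ℝ E] {T : E →ₗ[ℝ] E}

theorem hasFDerivAt_inner_self (hT : T.IsSymmetric) (x : E) :
    HasFDerivAt (fun y => ⟪T y, y⟫) (innerSL ℝ ((2 : ℝ) • T x)) x := by
  refine (T.toContinuousLinearMap.hasFDerivAt.inner ℝ (hasFDerivAt_id x)).congr_fderiv ?_
  ext v
  simp only [coe_toContinuousLinearMap', id_eq, ContinuousLinearMap.comp_apply,
    ContinuousLinearMap.prod_apply, ContinuousLinearMap.id_apply, fderivInnerCLM_apply, hT v x,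
    map_smul, _root_.smul_apply, coe_innerSL_apply, smul_eq_mul, real_inner_comm (T x) v]
  ring

theorem hasFDerivAt_inner_self_sq (hT : T.IsSymmetric) (x : E) :
    HasFDerivAt (fun y => ⟪T y, y⟫ ^ 2) (innerSL ℝ ((4 * ⟪T x, x⟫) • T x)) x := by
  refine ((hT.hasFDerivAt_inner_self x).pow 2).congr_fderiv ?_
  simp only [map_smul, smul_smul, Nat.add_one_sub_one, pow_one, nsmul_eq_mul, Nat.cast_ofNat]
  congr 1
  ring

end LinearMap.IsSymmetric

variable {ι : Type*}

structure IsSymmetricCliffordSystem [DecidableEq ι] (P : ι → E →ₗ[ℝ] E) : Prop where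
  isSymmetric : ∀ i, (P i).IsSymmetric
  anticomm : ∀ i j, P i ∘ₗ P j + P j ∘ₗ P i = if i = j then (2 : ℝ) • LinearMap.id else 0

namespace IsSymmetricCliffordSystem

variable [DecidableEq ι] {P : ι → E →ₗ[ℝ] E}

theorem inner_apply_apply (hP : IsSymmetricCliffordSystem P) (i j : ι) (x : E) :
    ⟪P i x, P j x⟫ = if i = j then ‖x‖ ^ 2 else 0 := by
  have h := congrArg (fun T : E →ₗ[ℝ] E => ⟪x, T x⟫) (hP.anticomm i j)
  simp only [LinearMap.add_apply, LinearMap.comp_apply, inner_add_right] at h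
  rw [← hP.isSymmetric i x, ← hP.isSymmetric j x, real_inner_comm (P i x)] at h
  split_ifs at h ⊢ with hij
  · subst hij
    rw [LinearMap.smul_apply, LinearMap.id_apply, inner_smul_right,
      real_inner_self_eq_norm_sq x] at h
    linarith
  · rw [LinearMap.zero_apply, inner_zero_right] at h
    linarith

end IsSymmetricCliffordSystem

section FKM

variable [Fintype ι] (P : ι → E →ₗ[ℝ] E)

def fkmPoly (x : E) : ℝ := ‖x‖ ^ 4 - 2 * ∑ i, ⟪P i x, x⟫ ^ 2

def fkmGrad (x : E) : E := (4 * ‖x‖ ^ 2) • x - (8 : ℝ) • ∑ i, ⟪P i x, x⟫ • P i x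

theorem hasGradientAt_fkmPoly [FiniteDimensional ℝ E] (hP : ∀ i, (P i).IsSymmetric) (x : E) :
    HasGradientAt (fkmPoly P) (fkmGrad P x) x := by
  have hpoly :
      fkmPoly P = fun y => ⟪(LinearMap.id : E →ₗ[ℝ] E) y, y⟫ ^ 2 - 2 * ∑ i, ⟪P i y, y⟫ ^ 2 := by
    ext y
    rw [fkmPoly, LinearMap.id_apply, real_inner_self_eq_norm_sq, ← pow_mul]
  have hid := LinearMap.IsSymmetric.id.hasFDerivAt_inner_self_sq x
  have hsum :=
    HasFDerivAt.fun_sum (u := Finset.univ) fun i _ => (hP i).hasFDerivAt_inner_self_sq x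
  rw [hasGradientAt_iff_hasFDerivAt, hpoly]
  refine (hid.sub (hsum.const_mul 2)).congr_fderiv ?_
  ext v
  simp only [fkmGrad, LinearMap.id_apply, real_inner_self_eq_norm_sq, map_sub, map_smul, map_sum,
    sub_apply, smul_apply, sum_apply, coe_innerSL_apply, InnerProductSpace.toDual_apply_apply,
    smul_eq_mul, Finset.mul_sum, sub_right_inj]
  exact Finset.sum_congr rfl fun i _ => by ring

theorem inner_fkmGrad_self (x : E) : ⟪fkmGrad P x, x⟫ = 4 * fkmPoly P x := by
  simp only [fkmGrad, fkmPoly, inner_sub_left, inner_smul_left, sum_inner,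
    real_inner_self_eq_norm_sq, conj_trivial, ← sq]
  ring

namespace IsSymmetricCliffordSystem

variable [DecidableEq ι] {P}

theorem norm_sum_smul_apply_sq (hP : IsSymmetricCliffordSystem P) (c : ι → ℝ) (x : E) :
    ‖∑ i, c i • P i x‖ ^ 2 = ‖x‖ ^ 2 * ∑ i, c i ^ 2 := by
  simp only [← real_inner_self_eq_norm_sq, sum_inner, inner_sum, inner_smul_left, inner_smul_right,
    hP.inner_apply_apply, conj_trivial, mul_ite, mul_zero, Finset.sum_ite_eq', Finset.mem_univ,
    if_true, Finset.mul_sum]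
  exact Finset.sum_congr rfl fun i _ => by ring

theorem norm_fkmGrad_sq (hP : IsSymmetricCliffordSystem P) (x : E) :
    ‖fkmGrad P x‖ ^ 2 = 16 * ‖x‖ ^ 6 := by
  have hinner : ⟪x, ∑ i, ⟪P i x, x⟫ • P i x⟫ = ∑ i, ⟪P i x, x⟫ ^ 2 :=
    (inner_sum _ _ _).trans <| Finset.sum_congr rfl fun i _ => by
      rw [inner_smul_right, real_inner_comm x, sq]
  rw [fkmGrad, norm_sub_sq_real, norm_smul, norm_smul, mul_pow, mul_pow, inner_smul_left,
    inner_smul_right, hinner, hP.norm_sum_smul_apply_sq, Real.norm_of_nonneg (by positivity)]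
  simp only [Real.ringHom_apply, Real.norm_ofNat]
  ring

end IsSymmetricCliffordSystem

end FKM

/-- The FKM polynomial satisfies `⟪∇F(x), x⟫ = 4 F(x)` (Euler's identity for
degree `4`), and for every unit vector `x` the squared norm of the spherical
(tangential) part of `∇F(x)` is `|∇F(x)|² - ⟪∇F(x), x⟫² = 16 (1 - F(x)²)`;
i.e. the restriction `f = F|_{S^{2l-1}}` is transnormal with `|∇ˢf|² = 16(1 - f²)`. -/
theorem fkm_transnormal {l m : ℕ}
    (P : Fin (m + 1) →
      (EuclideanSpace ℝ (Fin (2 * l)) →ₗ[ℝ] EuclideanSpace ℝ (Fin (2 * l))))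
    (hsymm : ∀ i, (P i).IsSymmetric)
    (hcliff : ∀ i j, P i ∘ₗ P j + P j ∘ₗ P i =
      if i = j then (2 : ℝ) • (LinearMap.id :
        EuclideanSpace ℝ (Fin (2 * l)) →ₗ[ℝ] EuclideanSpace ℝ (Fin (2 * l))) else 0)
    (F : EuclideanSpace ℝ (Fin (2 * l)) → ℝ)
    (hF : ∀ x, F x = ‖x‖ ^ 4 - 2 * ∑ i, ⟪P i x, x⟫ ^ 2) :
    (∀ x, ⟪gradient F x, x⟫ = 4 * F x) ∧
      (∀ x : EuclideanSpace ℝ (Fin (2 * l)), ‖x‖ = 1 →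
        ‖gradient F x‖ ^ 2 - ⟪gradient F x, x⟫ ^ 2 = 16 * (1 - F x ^ 2)) := by
  obtain rfl : F = fkmPoly P := funext hF
  have hP : IsSymmetricCliffordSystem P := ⟨hsymm, hcliff⟩
  have hgrad x : gradient (fkmPoly P) x = fkmGrad P x := (hasGradientAt_fkmPoly P hsymm x).gradient
  refine ⟨fun x => by rw [hgrad, inner_fkmGrad_self], fun x hx => ?_⟩
  rw [hgrad, inner_fkmGrad_self, hP.norm_fkmGrad_sq, hx]
  ring
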